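/- arXiv:2101.09082 — 2 statements merged into one kernel-verified Lean document; each statement's English description precedes it below -/
import Mathlib

section
/- Let Φ ∈ ℂ^{M×N} and let δ ≥ 0 be a restricted isometry constant of order t for Φ. If V ∈ ℂ^{N×L} and R ⊆ {1,…,N} satisfy |R ∪ supp(V)| ≤ t, then ‖[(I − Φ*Φ)V]_(R)‖_F ≤ δ · ‖V‖_F. -/
open Matrix BigOperators

/-- Frobenius norm of a complex matrix. -/
noncomputable def frobNorm {m n : Type*} [Fintype m] [Fintype n] (A : Matrix m n ℂ) : ℝ :=
  Real.sqrt (∑ i, ∑ j, ‖A i j‖ ^ 2)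

open scoped Classical in
/-- The row support of a matrix: indices of its nonzero rows. -/
noncomputable def rowSupp {N L : ℕ} (X : Matrix (Fin N) (Fin L) ℂ) : Finset (Fin N) :=
  Finset.univ.filter (fun i => X i ≠ 0)

/-- `X_(T)`: the matrix obtained from `X` by zeroing every row with index outside `T`. -/
def rowRestrict {N L : ℕ} (T : Finset (Fin N)) (X : Matrix (Fin N) (Fin L) ℂ) :
    Matrix (Fin N) (Fin L) ℂ :=
  fun i j => if i ∈ T then X i j else 0

/-- Euclidean norm of a complex vector. -/
noncomputable def vecNorm {ι : Type*} [Fintype ι] (v : ι → ℂ) : ℝ :=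
  Real.sqrt (∑ i, ‖v i‖ ^ 2)

/-- `Φ_T`: the submatrix of columns of `Φ` indexed by `T`. -/
def colSub {M N : ℕ} (Φ : Matrix (Fin M) (Fin N) ℂ) (T : Finset (Fin N)) :
    Matrix (Fin M) {x // x ∈ T} ℂ :=
  fun i j => Φ i j.val

/-- `X_{(T)}`: the submatrix of rows of `X` indexed by `T`. -/
def rowSub {N L : ℕ} (T : Finset (Fin N)) (X : Matrix (Fin N) (Fin L) ℂ) :
    Matrix {x // x ∈ T} (Fin L) ℂ :=
  fun i j => X i.val j

/-- The set of values `‖R v‖` over unit vectors `v` (the "singular value range"). -/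
noncomputable def sigmaSet {L : ℕ} (R : Matrix (Fin L) (Fin L) ℂ) : Set ℝ :=
  {c | ∃ v : Fin L → ℂ, vecNorm v = 1 ∧ c = vecNorm (R.mulVec v)}

/-- The largest singular value of `R`. -/
noncomputable def sigmaMax {L : ℕ} (R : Matrix (Fin L) (Fin L) ℂ) : ℝ :=
  sSup (sigmaSet R)

/-- The smallest singular value of `R` (for invertible `R`). -/
noncomputable def sigmaMin {L : ℕ} (R : Matrix (Fin L) (Fin L) ℂ) : ℝ :=
  sInf (sigmaSet R)

/-- Spectral (operator) norm of a square complex matrix. -/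
noncomputable def specNorm {ι : Type*} [Fintype ι] (A : Matrix ι ι ℂ) : ℝ :=
  sSup {c | ∃ v : ι → ℂ, vecNorm v = 1 ∧ c = vecNorm (A.mulVec v)}

/-- `δ` is a restricted isometry constant (RIC) of order `t` for `A`, relative to matrices with
`L` columns: `(1-δ)‖Z‖_F² ≤ ‖AZ‖_F² ≤ (1+δ)‖Z‖_F²` for every `t` row-sparse `Z`. -/
def IsRIC {M N : ℕ} (L : ℕ) (A : Matrix (Fin M) (Fin N) ℂ) (t : ℕ) (δ : ℝ) : Prop :=
  ∀ Z : Matrix (Fin N) (Fin L) ℂ, (rowSupp Z).card ≤ t →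
    (1 - δ) * frobNorm Z ^ 2 ≤ frobNorm (A * Z) ^ 2 ∧
      frobNorm (A * Z) ^ 2 ≤ (1 + δ) * frobNorm Z ^ 2

/-- `γ` is a preconditioned restricted isometry constant (P-RIC) of order `t` for `Φ`:
`(1-γ)‖Z‖_F² ≤ Re tr((ΦZ)* (ΦΦ*)⁻¹ (ΦZ))` for every `t` row-sparse `Z`. -/
def IsPRIC {M N : ℕ} (L : ℕ) (Φ : Matrix (Fin M) (Fin N) ℂ) (t : ℕ) (γ : ℝ) : Prop :=
  ∀ Z : Matrix (Fin N) (Fin L) ℂ, (rowSupp Z).card ≤ t →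
    (1 - γ) * frobNorm Z ^ 2 ≤ (Matrix.trace ((Φ * Z)ᴴ * ((Φ * Φᴴ)⁻¹ * (Φ * Z)))).re

/-- `θ` is an upper restricted isometry constant of order `t` for `A`:
`‖AZ‖_F² ≤ (1+θ)‖Z‖_F²` for every `t` row-sparse `Z`. -/
def IsUpperRIC {M N : ℕ} (L : ℕ) (A : Matrix (Fin M) (Fin N) ℂ) (t : ℕ) (θ : ℝ) : Prop :=
  ∀ Z : Matrix (Fin N) (Fin L) ℂ, (rowSupp Z).card ≤ t →
    frobNorm (A * Z) ^ 2 ≤ (1 + θ) * frobNorm Z ^ 2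

/-- The least-squares feedback of `X` on the index set `T`:
rows outside `T` are zero and on `T` it equals
`X_{(T)} + (Φ_T* Φ_T)⁻¹ Φ_T* Φ_{T^c} X_{(T^c)}`. -/
noncomputable def feedback {M N L : ℕ} (Φ : Matrix (Fin M) (Fin N) ℂ) (T : Finset (Fin N))
    (X : Matrix (Fin N) (Fin L) ℂ) : Matrix (Fin N) (Fin L) ℂ :=
  fun i j =>
    if h : i ∈ T then
      (rowSub T X +
        ((colSub Φ T)ᴴ * colSub Φ T)⁻¹ * (colSub Φ T)ᴴ *
          (colSub Φ Tᶜ * rowSub Tᶜ X)) ⟨i, h⟩ j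
    else 0

/-!
On matrices supported on a common set of at most `t` rows, `Φ` preserves the real Frobenius
inner product up to `δ`: polarizing the RIP inequalities for `X ± Y` bounds
`Re⟨ΦX, ΦY⟩ - Re⟨X, Y⟩` by `δ ‖X‖ ‖Y‖`. For `W = [(I - Φ*Φ)V]_(R)` both `W` and `V` are supported
on `R ∪ supp V`, and `‖W‖² = Re⟨W, (I - Φ*Φ)V⟩ = Re⟨W, V⟩ - Re⟨ΦW, ΦV⟩ ≤ δ ‖W‖ ‖V‖`.
-/

section FrobeniusInner

variable {l m n : Type*} [Fintype l] [Fintype m] [Fintype n]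

noncomputable def frobInner (A B : Matrix m n ℂ) : ℝ :=
  (trace (Aᴴ * B)).re

lemma frobInner_eq_sum (A B : Matrix m n ℂ) :
    frobInner A B = ∑ i, ∑ j, (star (A i j) * B i j).re := by
  simp only [frobInner, trace, diag_apply, mul_apply, conjTranspose_apply, Complex.re_sum]
  exact Finset.sum_comm

lemma frobInner_comm (A B : Matrix m n ℂ) : frobInner A B = frobInner B A := by
  rw [frobInner, frobInner, ← conjTranspose_conjTranspose A, ← conjTranspose_mul,
    trace_conjTranspose, conjTranspose_conjTranspose, Complex.star_def, Complex.conj_re]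

lemma frobInner_add_right (A B C : Matrix m n ℂ) :
    frobInner A (B + C) = frobInner A B + frobInner A C := by
  simp only [frobInner, Matrix.mul_add, trace_add, Complex.add_re]

lemma frobInner_sub_right (A B C : Matrix m n ℂ) :
    frobInner A (B - C) = frobInner A B - frobInner A C := by
  simp only [frobInner, Matrix.mul_sub, trace_sub, Complex.sub_re]

lemma frobInner_add_left (A B C : Matrix m n ℂ) :
    frobInner (A + B) C = frobInner A C + frobInner B C := by
  rw [frobInner_comm, frobInner_add_right, frobInner_comm C, frobInner_comm C]

lemma frobInner_sub_left (A B C : Matrix m n ℂ) :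
    frobInner (A - B) C = frobInner A C - frobInner B C := by
  rw [frobInner_comm, frobInner_sub_right, frobInner_comm C, frobInner_comm C]

lemma frobInner_smul_right (c : ℝ) (A B : Matrix m n ℂ) :
    frobInner A ((c : ℂ) • B) = c * frobInner A B := by
  rw [frobInner, Matrix.mul_smul, trace_smul, smul_eq_mul, Complex.re_ofReal_mul, frobInner]

lemma frobInner_smul_left (c : ℝ) (A B : Matrix m n ℂ) :
    frobInner ((c : ℂ) • A) B = c * frobInner A B := by
  rw [frobInner_comm, frobInner_smul_right, frobInner_comm]

lemma frobInner_mul_left (Φ : Matrix l m ℂ) (X : Matrix m n ℂ) (Y : Matrix l n ℂ) :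
    frobInner (Φ * X) Y = frobInner X (Φᴴ * Y) := by
  rw [frobInner, frobInner, conjTranspose_mul, Matrix.mul_assoc]

lemma frobNorm_sq (A : Matrix m n ℂ) : frobNorm A ^ 2 = frobInner A A := by
  rw [frobNorm, Real.sq_sqrt (by positivity), frobInner_eq_sum]
  simp only [Complex.star_def, Complex.conj_mul', ← Complex.ofReal_pow, Complex.ofReal_re]

lemma frobNorm_nonneg (A : Matrix m n ℂ) : 0 ≤ frobNorm A :=
  Real.sqrt_nonneg _

lemma frobNorm_eq_zero {A : Matrix m n ℂ} : frobNorm A = 0 ↔ A = 0 := by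
  rw [frobNorm, Real.sqrt_eq_zero (by positivity), Finset.sum_eq_zero_iff_of_nonneg
    (fun _ _ => by positivity)]
  simp [Finset.sum_eq_zero_iff_of_nonneg, ← Matrix.ext_iff]

lemma frobNorm_smul (c : ℝ) (A : Matrix m n ℂ) : frobNorm ((c : ℂ) • A) = |c| * frobNorm A := by
  rw [← Real.sqrt_sq (frobNorm_nonneg _), frobNorm_sq, frobInner_smul_left, frobInner_smul_right,
    ← mul_assoc, ← sq, ← frobNorm_sq, ← mul_pow, Real.sqrt_sq_eq_abs, abs_mul,
    abs_of_nonneg (frobNorm_nonneg A)]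

lemma frobNorm_add_sq (A B : Matrix m n ℂ) :
    frobNorm (A + B) ^ 2 = frobNorm A ^ 2 + 2 * frobInner A B + frobNorm B ^ 2 := by
  simp only [frobNorm_sq, frobInner_add_left, frobInner_add_right, frobInner_comm B A]
  ring

lemma frobNorm_sub_sq (A B : Matrix m n ℂ) :
    frobNorm (A - B) ^ 2 = frobNorm A ^ 2 - 2 * frobInner A B + frobNorm B ^ 2 := by
  simp only [frobNorm_sq, frobInner_sub_left, frobInner_sub_right, frobInner_comm B A]
  ring

end FrobeniusInner

section RowSupport

variable {N L : ℕ}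

lemma rowSupp_subset_iff {X : Matrix (Fin N) (Fin L) ℂ} {S : Finset (Fin N)} :
    rowSupp X ⊆ S ↔ ∀ i ∉ S, ∀ j, X i j = 0 := by
  simp only [rowSupp, Finset.subset_iff, Finset.mem_filter, Finset.mem_univ, true_and]
  exact forall_congr' fun i => not_imp_comm.trans (imp_congr_right fun _ => funext_iff)

lemma rowSupp_add_subset {X Y : Matrix (Fin N) (Fin L) ℂ} {S : Finset (Fin N)}
    (hX : rowSupp X ⊆ S) (hY : rowSupp Y ⊆ S) : rowSupp (X + Y) ⊆ S := by
  rw [rowSupp_subset_iff] at *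
  intro i hi j
  simp [hX i hi j, hY i hi j]

lemma rowSupp_sub_subset {X Y : Matrix (Fin N) (Fin L) ℂ} {S : Finset (Fin N)}
    (hX : rowSupp X ⊆ S) (hY : rowSupp Y ⊆ S) : rowSupp (X - Y) ⊆ S := by
  rw [rowSupp_subset_iff] at *
  intro i hi j
  simp [hX i hi j, hY i hi j]

lemma rowSupp_smul_subset (c : ℂ) {X : Matrix (Fin N) (Fin L) ℂ} {S : Finset (Fin N)}
    (hX : rowSupp X ⊆ S) : rowSupp (c • X) ⊆ S := by
  rw [rowSupp_subset_iff] at *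
  intro i hi j
  simp [hX i hi j]

lemma rowSupp_rowRestrict_subset (R : Finset (Fin N)) (X : Matrix (Fin N) (Fin L) ℂ) :
    rowSupp (rowRestrict R X) ⊆ R :=
  rowSupp_subset_iff.2 fun _ hi _ => if_neg hi

lemma frobNorm_rowRestrict_sq (R : Finset (Fin N)) (X : Matrix (Fin N) (Fin L) ℂ) :
    frobNorm (rowRestrict R X) ^ 2 = frobInner (rowRestrict R X) X := by
  simp only [frobNorm_sq, frobInner_eq_sum, rowRestrict]
  refine Finset.sum_congr rfl fun i _ => ?_
  split_ifs <;> simp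

end RowSupport

namespace IsRIC

variable {M N L t : ℕ} {Φ : Matrix (Fin M) (Fin N) ℂ} {δ : ℝ}

lemma abs_frobNorm_mul_sq_sub_le (hΦ : IsRIC L Φ t δ) {Z : Matrix (Fin N) (Fin L) ℂ}
    (hZ : (rowSupp Z).card ≤ t) :
    |frobNorm (Φ * Z) ^ 2 - frobNorm Z ^ 2| ≤ δ * frobNorm Z ^ 2 := by
  obtain ⟨hlow, hup⟩ := hΦ Z hZ
  rw [abs_le]
  constructor <;> linarith

lemma abs_frobInner_mul_sub_le_add (hΦ : IsRIC L Φ t δ) {X Y : Matrix (Fin N) (Fin L) ℂ}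
    {S : Finset (Fin N)} (hX : rowSupp X ⊆ S) (hY : rowSupp Y ⊆ S) (hS : S.card ≤ t) :
    |frobInner (Φ * X) (Φ * Y) - frobInner X Y| ≤ δ / 2 * (frobNorm X ^ 2 + frobNorm Y ^ 2) := by
  have hadd := hΦ.abs_frobNorm_mul_sq_sub_le
    ((Finset.card_le_card (rowSupp_add_subset hX hY)).trans hS)
  have hsub := hΦ.abs_frobNorm_mul_sq_sub_le
    ((Finset.card_le_card (rowSupp_sub_subset hX hY)).trans hS)
  rw [Matrix.mul_add, frobNorm_add_sq, frobNorm_add_sq] at hadd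
  rw [Matrix.mul_sub, frobNorm_sub_sq, frobNorm_sub_sq] at hsub
  rw [abs_le] at hadd hsub ⊢
  constructor <;> linarith [hadd.1, hadd.2, hsub.1, hsub.2]

lemma abs_frobInner_mul_sub_le (hΦ : IsRIC L Φ t δ) {X Y : Matrix (Fin N) (Fin L) ℂ}
    {S : Finset (Fin N)} (hX : rowSupp X ⊆ S) (hY : rowSupp Y ⊆ S) (hS : S.card ≤ t) :
    |frobInner (Φ * X) (Φ * Y) - frobInner X Y| ≤ δ * frobNorm X * frobNorm Y := by
  set a := frobNorm X
  set b := frobNorm Y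
  rcases (frobNorm_nonneg X).eq_or_lt with ha | ha
  · simp [a, ← ha, frobNorm_eq_zero.1 ha.symm, frobInner_eq_sum]
  rcases (frobNorm_nonneg Y).eq_or_lt with hb | hb
  · simp [b, ← hb, frobNorm_eq_zero.1 hb.symm, frobInner_eq_sum]
  -- rescaling `X` by `b` and `Y` by `a` gives both the norm `a * b`, where AM-GM is sharp
  have h := hΦ.abs_frobInner_mul_sub_le_add
    (rowSupp_smul_subset (b : ℂ) hX) (rowSupp_smul_subset (a : ℂ) hY) hS
  rw [Matrix.mul_smul, Matrix.mul_smul, frobInner_smul_left, frobInner_smul_right,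
    frobInner_smul_left, frobInner_smul_right, frobNorm_smul, frobNorm_smul, abs_of_pos ha,
    abs_of_pos hb, ← mul_assoc, ← mul_assoc, ← mul_sub, abs_mul, abs_of_pos (mul_pos hb ha)] at h
  exact le_of_mul_le_mul_left (h.trans_eq (by ring)) (mul_pos hb ha)

end IsRIC

/-- RIP restricted-rows estimate (second part of Lemma 4 of the paper). -/
theorem stmt1 {M N L t : ℕ} (Φ : Matrix (Fin M) (Fin N) ℂ) (δ : ℝ) (hδ : 0 ≤ δ)
    (hRIC : IsRIC L Φ t δ) (V : Matrix (Fin N) (Fin L) ℂ) (R : Finset (Fin N))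
    (hsupp : (R ∪ rowSupp V).card ≤ t) :
    frobNorm (rowRestrict R ((1 - Φᴴ * Φ) * V)) ≤ δ * frobNorm V := by
  rw [Matrix.sub_mul, Matrix.one_mul, Matrix.mul_assoc]
  set W := rowRestrict R (V - Φᴴ * (Φ * V))
  have hW : frobNorm W ^ 2 = frobInner W V - frobInner (Φ * W) (Φ * V) := by
    rw [frobInner_mul_left, ← frobInner_sub_right, frobNorm_rowRestrict_sq]
  have hbound : frobNorm W * frobNorm W ≤ frobNorm W * (δ * frobNorm V) := by
    have h := hRIC.abs_frobInner_mul_sub_le (X := W)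
      ((rowSupp_rowRestrict_subset R _).trans Finset.subset_union_left)
      Finset.subset_union_right hsupp
    rw [abs_sub_comm, ← hW, abs_of_nonneg (sq_nonneg _)] at h
    linarith
  rcases (frobNorm_nonneg W).eq_or_lt with h0 | hpos
  · rw [← h0]
    exact mul_nonneg hδ (frobNorm_nonneg V)
  · exact le_of_mul_le_mul_left hbound hpos
end

section
/- Let Y = ΦX + E with Φ ∈ ℂ^{M×N}, X ∈ ℂ^{N×L} s row-sparse, and E ∈ ℂ^{M×L}. Let X̃ ∈ ℂ^{N×L} satisfy ΦX̃ = Y, let T ⊆ {1,…,N} with |T| = t be such that Φ_T*Φ_T is invertible, and let W̄ be the feedback of X̃: W̄_(T^c) = 0 and W̄_{(T)} = X̃_{(T)} + (Φ_T*Φ_T)⁻¹Φ_T*Φ_{T^c}X̃_{(T^c)}. If δ_{s+t} < 1 is a restricted isometry constant of order s+t for Φ and δ_t is a restricted isometry constant of order t for Φ, then ‖X − W̄‖_F ≤ ‖X_(T^c)‖_F / √(1 − δ_{s+t}²) + √(1+δ_t)·‖E‖_F / (1 − δ_{s+t}). -/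
open Matrix BigOperators

/-!
The error `V = X - W̄` splits orthogonally as `U + X_(Tᶜ)` with `U = V_(T)`, because `W̄` vanishes
off `T`. The feedback is a least-squares fit on `T`, so the residual `Y - ΦW̄ = ΦV + E` is
orthogonal to `ΦU`. Polarizing the restricted isometry inequality on the `(s+t)`-sparse pair
`U, V` then gives `‖U‖² = Re⟪U, V⟫ ≤ δ_{s+t}‖U‖‖V‖ + Re⟪ΦU, ΦV⟫ = δ_{s+t}‖U‖‖V‖ - Re⟪ΦU, E⟫`,
and `‖ΦU‖ ≤ √(1+δ_t)‖U‖` turns this into `‖U‖ ≤ δ_{s+t}‖V‖ + √(1+δ_t)‖E‖`. Together with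
`‖V‖² = ‖U‖² + ‖X_(Tᶜ)‖²` this is a quadratic inequality in `‖V‖` whose positive root is
bounded by the claimed quantity.
-/

namespace Matrix

open scoped ComplexOrder

variable {𝕜 : Type*} [RCLike 𝕜] {l m n : Type*} [Fintype l] [Fintype m] [Fintype n]

noncomputable abbrev frobeniusInnerCore : InnerProductSpace.Core 𝕜 (Matrix m n 𝕜) where
  inner A B := trace (Aᴴ * B)
  conj_inner_symm A B := by
    rw [starRingEnd_apply, ← trace_conjTranspose, conjTranspose_mul, conjTranspose_conjTranspose]
  re_inner_nonneg A := (RCLike.nonneg_iff.mp (posSemidef_conjTranspose_mul_self A).trace_nonneg).1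
  add_left A B C := by simp [Matrix.add_mul]
  smul_left A B c := by simp
  definite A h := trace_conjTranspose_mul_self_eq_zero_iff.mp h

-- Mathlib puts no global norm on `Matrix`; here every matrix carries the Frobenius structure.
noncomputable instance : NormedAddCommGroup (Matrix m n 𝕜) :=
  (frobeniusInnerCore (𝕜 := 𝕜)).toNormedAddCommGroup

noncomputable instance : InnerProductSpace 𝕜 (Matrix m n 𝕜) :=
  InnerProductSpace.ofCore _

theorem inner_eq_trace (A B : Matrix m n 𝕜) : inner 𝕜 A B = trace (Aᴴ * B) := rfl

theorem inner_mul_left (P : Matrix l m 𝕜) (A : Matrix m n 𝕜) (B : Matrix l n 𝕜) :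
    inner 𝕜 (P * A) B = inner 𝕜 A (Pᴴ * B) := by
  simp only [inner_eq_trace, conjTranspose_mul, Matrix.mul_assoc]

end Matrix

theorem frobNorm_eq_norm {m n : Type*} [Fintype m] [Fintype n] (A : Matrix m n ℂ) :
    frobNorm A = ‖A‖ := by
  rw [@norm_eq_sqrt_re_inner ℂ, frobNorm, inner_eq_trace, trace]
  congr 1
  simp only [diag_apply, mul_apply, conjTranspose_apply, RCLike.star_def, RCLike.conj_mul]
  rw [Finset.sum_comm]
  norm_cast

section RestrictedIsometry

open RCLike

variable {𝕜 E F : Type*} [RCLike 𝕜] [NormedAddCommGroup E] [InnerProductSpace 𝕜 E]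
  [NormedAddCommGroup F] [InnerProductSpace 𝕜 F]

local notation "⟪" x ", " y "⟫" => inner 𝕜 x y

theorem two_mul_re_inner_sub_re_inner_map_le (f : E →ₗ[𝕜] F) (V : Submodule 𝕜 E)
    {δ : ℝ} (hf : ∀ z ∈ V, (1 - δ) * ‖z‖ ^ 2 ≤ ‖f z‖ ^ 2 ∧ ‖f z‖ ^ 2 ≤ (1 + δ) * ‖z‖ ^ 2)
    {x y : E} (hx : x ∈ V) (hy : y ∈ V) :
    2 * (re ⟪x, y⟫ - re ⟪f x, f y⟫) ≤ δ * (‖x‖ ^ 2 + ‖y‖ ^ 2) := by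
  have hadd := (hf _ (V.add_mem hx hy)).1
  have hsub := (hf _ (V.sub_mem hx hy)).2
  rw [map_add, norm_add_sq (𝕜 := 𝕜), norm_add_sq (𝕜 := 𝕜)] at hadd
  rw [map_sub, norm_sub_sq (𝕜 := 𝕜), norm_sub_sq (𝕜 := 𝕜)] at hsub
  linarith

theorem re_inner_sub_re_inner_map_le (f : E →ₗ[𝕜] F) (V : Submodule 𝕜 E)
    {δ : ℝ} (hf : ∀ z ∈ V, (1 - δ) * ‖z‖ ^ 2 ≤ ‖f z‖ ^ 2 ∧ ‖f z‖ ^ 2 ≤ (1 + δ) * ‖z‖ ^ 2)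
    {x y : E} (hx : x ∈ V) (hy : y ∈ V) :
    re ⟪x, y⟫ - re ⟪f x, f y⟫ ≤ δ * (‖x‖ * ‖y‖) := by
  rcases eq_or_ne x 0 with rfl | hx0
  · simp
  rcases eq_or_ne y 0 with rfl | hy0
  · simp
  have hxy : 0 < ‖x‖ * ‖y‖ := mul_pos (norm_pos_iff.2 hx0) (norm_pos_iff.2 hy0)
  -- polarize at the rescaled pair `‖y‖ x, ‖x‖ y`, whose two norms agree
  have h := two_mul_re_inner_sub_re_inner_map_le f V hf
    (V.smul_mem (‖y‖ : 𝕜) hx) (V.smul_mem (‖x‖ : 𝕜) hy)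
  simp only [map_smul, inner_smul_real_left, inner_smul_real_right, smul_re, norm_smul,
    norm_ofReal, abs_norm] at h
  nlinarith

end RestrictedIsometry

theorem le_div_sqrt_add_div_of_le_mul_add {δ U V W C : ℝ} (hδ0 : 0 ≤ δ) (hδ1 : δ < 1)
    (hU : 0 ≤ U) (hW : 0 ≤ W) (hC : 0 ≤ C) (hUV : U ≤ δ * V + C) (hV : V ^ 2 = U ^ 2 + W ^ 2) :
    V ≤ W / √(1 - δ ^ 2) + C / (1 - δ) := by
  have hr : 0 < 1 - δ ^ 2 := by nlinarith
  set A := W / √(1 - δ ^ 2)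
  set B := C / (1 - δ)
  have hA : W = A * √(1 - δ ^ 2) := (div_mul_cancel₀ W (Real.sqrt_pos.2 hr).ne').symm
  have hB : C = B * (1 - δ) := (div_mul_cancel₀ C (by linarith)).symm
  have hA0 : 0 ≤ A := by positivity
  have hB0 : 0 ≤ B := div_nonneg hC (by linarith)
  have hW2 : W ^ 2 = A ^ 2 * (1 - δ ^ 2) := by rw [hA, mul_pow, Real.sq_sqrt hr.le]
  by_contra! hlt
  -- `(V² - W² - (δV + C)²) / (1 - δ) = (1 + δ)V² - 2δBV - (1 - δ)B² - (1 + δ)A²` is `2AB`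
  -- at `V = A + B` and increasing beyond it
  have : V ^ 2 - W ^ 2 ≤ (δ * V + C) ^ 2 := by nlinarith
  rw [hW2, hB] at this
  nlinarith [mul_pos (sub_pos.2 hlt) (show 0 < (1 + δ) * (V + A) + (1 - δ) * B by nlinarith),
    mul_nonneg hA0 hB0]

section RowSupport

variable {M N : ℕ} (L : ℕ)

def rowSupported (S : Finset (Fin N)) : Submodule ℂ (Matrix (Fin N) (Fin L) ℂ) where
  carrier := {Z | ∀ i ∉ S, ∀ j, Z i j = 0}
  add_mem' hA hB i hi j := by rw [Matrix.add_apply, hA i hi j, hB i hi j, add_zero]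
  zero_mem' _ _ _ := rfl
  smul_mem' c Z hZ i hi j := by rw [Matrix.smul_apply, hZ i hi j, smul_zero]

variable {L}

theorem rowSupported_mono {S S' : Finset (Fin N)} (h : S ⊆ S') :
    rowSupported L S ≤ rowSupported L S' :=
  fun _ hZ i hi => hZ i fun hiS => hi (h hiS)

theorem mem_rowSupported_rowSupp (Z : Matrix (Fin N) (Fin L) ℂ) :
    Z ∈ rowSupported L (rowSupp Z) := by
  intro i hi
  have hrow : Z i = 0 := by simpa [rowSupp] using hi
  exact congrFun hrow

theorem rowSupp_subset_of_mem_rowSupported {S : Finset (Fin N)} {Z : Matrix (Fin N) (Fin L) ℂ}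
    (hZ : Z ∈ rowSupported L S) : rowSupp Z ⊆ S := by
  intro i hi
  by_contra hiS
  simp only [rowSupp, Finset.mem_filter] at hi
  exact hi.2 (funext (hZ i hiS))

theorem rowRestrict_mem_rowSupported (S : Finset (Fin N)) (Z : Matrix (Fin N) (Fin L) ℂ) :
    rowRestrict S Z ∈ rowSupported L S := by
  intro i hi j
  simp [rowRestrict, hi]

theorem rowRestrict_add_rowRestrict_compl (S : Finset (Fin N)) (Z : Matrix (Fin N) (Fin L) ℂ) :
    rowRestrict S Z + rowRestrict Sᶜ Z = Z := by
  ext i j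
  by_cases h : i ∈ S <;> simp [rowRestrict, h]

theorem inner_rowRestrict_rowRestrict_compl (S : Finset (Fin N))
    (A B : Matrix (Fin N) (Fin L) ℂ) :
    inner ℂ (rowRestrict S A) (rowRestrict Sᶜ B) = 0 := by
  simp only [inner_eq_trace, trace, diag_apply, mul_apply, conjTranspose_apply, rowRestrict]
  refine Finset.sum_eq_zero fun j _ => Finset.sum_eq_zero fun i _ => ?_
  by_cases h : i ∈ S <;> simp [h]

theorem norm_sq_eq_norm_rowRestrict_sq_add (S : Finset (Fin N)) (Z : Matrix (Fin N) (Fin L) ℂ) :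
    ‖Z‖ ^ 2 = ‖rowRestrict S Z‖ ^ 2 + ‖rowRestrict Sᶜ Z‖ ^ 2 := by
  conv_lhs => rw [← rowRestrict_add_rowRestrict_compl S Z]
  rw [norm_add_sq (𝕜 := ℂ), inner_rowRestrict_rowRestrict_compl, map_zero, mul_zero, add_zero]

theorem mul_rowRestrict (Φ : Matrix (Fin M) (Fin N) ℂ) (S : Finset (Fin N))
    (Z : Matrix (Fin N) (Fin L) ℂ) :
    Φ * rowRestrict S Z = colSub Φ S * rowSub S Z := by
  ext m l
  simp only [mul_apply, colSub, rowSub, rowRestrict, mul_ite, mul_zero]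
  rw [← Finset.sum_filter, Finset.filter_mem_eq_inter, Finset.univ_inter]
  exact Finset.sum_subtype S (fun _ => Iff.rfl) (fun i => Φ m i * Z i l)

theorem rowRestrict_eq_self {S : Finset (Fin N)} {Z : Matrix (Fin N) (Fin L) ℂ}
    (hZ : Z ∈ rowSupported L S) : rowRestrict S Z = Z := by
  ext i j
  by_cases h : i ∈ S <;> simp [rowRestrict, h, hZ i]

theorem mul_eq_colSub_mul_rowSub (Φ : Matrix (Fin M) (Fin N) ℂ) {S : Finset (Fin N)}
    {Z : Matrix (Fin N) (Fin L) ℂ} (hZ : Z ∈ rowSupported L S) :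
    Φ * Z = colSub Φ S * rowSub S Z := by
  rw [← mul_rowRestrict, rowRestrict_eq_self hZ]

theorem mul_eq_colSub_mul_rowSub_add (Φ : Matrix (Fin M) (Fin N) ℂ) (S : Finset (Fin N))
    (Z : Matrix (Fin N) (Fin L) ℂ) :
    Φ * Z = colSub Φ S * rowSub S Z + colSub Φ Sᶜ * rowSub Sᶜ Z := by
  conv_lhs => rw [← rowRestrict_add_rowRestrict_compl S Z]
  rw [Matrix.mul_add, mul_rowRestrict, mul_rowRestrict]

end RowSupport

namespace IsRIC

variable {M N L k : ℕ} {Φ : Matrix (Fin M) (Fin N) ℂ} {δ : ℝ}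

theorem norm_mul_le (h : IsRIC L Φ k δ) {Z : Matrix (Fin N) (Fin L) ℂ}
    (hZ : (rowSupp Z).card ≤ k) : ‖Φ * Z‖ ≤ √(1 + δ) * ‖Z‖ := by
  have hup := (h Z hZ).2
  rw [frobNorm_eq_norm, frobNorm_eq_norm] at hup
  rw [← Real.sqrt_sq (norm_nonneg Z), ← Real.sqrt_mul' _ (sq_nonneg _)]
  exact Real.le_sqrt_of_sq_le hup

theorem re_inner_sub_re_inner_mul_le (h : IsRIC L Φ k δ) {S : Finset (Fin N)} (hS : S.card ≤ k)
    {Z₁ Z₂ : Matrix (Fin N) (Fin L) ℂ} (h₁ : Z₁ ∈ rowSupported L S) (h₂ : Z₂ ∈ rowSupported L S) :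
    RCLike.re (inner ℂ Z₁ Z₂) - RCLike.re (inner ℂ (Φ * Z₁) (Φ * Z₂)) ≤ δ * (‖Z₁‖ * ‖Z₂‖) := by
  refine re_inner_sub_re_inner_map_le (mulLeftLinearMap (Fin L) ℂ Φ) _ (fun Z hZ => ?_) h₁ h₂
  simpa only [mulLeftLinearMap_apply, frobNorm_eq_norm] using
    h Z ((Finset.card_le_card (rowSupp_subset_of_mem_rowSupported hZ)).trans hS)

end IsRIC

section Feedback

variable {M N L : ℕ} (Φ : Matrix (Fin M) (Fin N) ℂ) (T : Finset (Fin N))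
  (Z : Matrix (Fin N) (Fin L) ℂ)

theorem feedback_mem_rowSupported : feedback Φ T Z ∈ rowSupported L T := by
  intro i hi j
  simp [feedback, hi]

theorem rowRestrict_compl_sub_feedback (X : Matrix (Fin N) (Fin L) ℂ) :
    rowRestrict Tᶜ (X - feedback Φ T Z) = rowRestrict Tᶜ X := by
  ext i j
  by_cases h : i ∈ T <;> simp [rowRestrict, h, feedback_mem_rowSupported Φ T Z i]

theorem rowSub_feedback :
    rowSub T (feedback Φ T Z) = rowSub T Z + ((colSub Φ T)ᴴ * colSub Φ T)⁻¹ * (colSub Φ T)ᴴ *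
      (colSub Φ Tᶜ * rowSub Tᶜ Z) := by
  ext ⟨i, hi⟩ j
  simp [rowSub, feedback, hi]

theorem conjTranspose_colSub_mul_sub_mul_feedback
    (hinv : IsUnit ((colSub Φ T)ᴴ * colSub Φ T)) :
    (colSub Φ T)ᴴ * (Φ * Z - Φ * feedback Φ T Z) = 0 := by
  have hGram : (colSub Φ T)ᴴ * colSub Φ T * ((colSub Φ T)ᴴ * colSub Φ T)⁻¹ = 1 :=
    mul_nonsing_inv _ ((isUnit_iff_isUnit_det _).mp hinv)
  rw [mul_eq_colSub_mul_rowSub Φ (feedback_mem_rowSupported Φ T Z), rowSub_feedback,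
    mul_eq_colSub_mul_rowSub_add Φ T Z]
  simp only [Matrix.mul_add, Matrix.mul_sub, ← Matrix.mul_assoc, hGram, Matrix.one_mul]
  abel

theorem inner_mul_eq_zero_of_conjTranspose_colSub_mul_eq_zero {R : Matrix (Fin M) (Fin L) ℂ}
    (hR : (colSub Φ T)ᴴ * R = 0) {Z : Matrix (Fin N) (Fin L) ℂ} (hZ : Z ∈ rowSupported L T) :
    inner ℂ (Φ * Z) R = 0 := by
  rw [mul_eq_colSub_mul_rowSub Φ hZ, inner_mul_left, hR, inner_zero_right]

end Feedback

theorem norm_rowRestrict_sub_feedback_le {M N L s t : ℕ} {Φ : Matrix (Fin M) (Fin N) ℂ}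
    {X Xt : Matrix (Fin N) (Fin L) ℂ} {E : Matrix (Fin M) (Fin L) ℂ} (hXs : (rowSupp X).card ≤ s)
    (hfeas : Φ * Xt = Φ * X + E) {T : Finset (Fin N)} (hTcard : T.card = t)
    (hinv : IsUnit ((colSub Φ T)ᴴ * colSub Φ T)) {δst δt : ℝ} (hδst0 : 0 ≤ δst)
    (hRICst : IsRIC L Φ (s + t) δst) (hRICt : IsRIC L Φ t δt) :
    ‖rowRestrict T (X - feedback Φ T Xt)‖ ≤
      δst * ‖X - feedback Φ T Xt‖ + √(1 + δt) * ‖E‖ := by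
  set V := X - feedback Φ T Xt
  set U := rowRestrict T V
  have hUT : U ∈ rowSupported L T := rowRestrict_mem_rowSupported T V
  have hS : (T ∪ rowSupp X).card ≤ s + t := (Finset.card_union_le _ _).trans (by omega)
  have hVS : V ∈ rowSupported L (T ∪ rowSupp X) :=
    sub_mem (rowSupported_mono Finset.subset_union_right (mem_rowSupported_rowSupp X))
      (rowSupported_mono Finset.subset_union_left (feedback_mem_rowSupported Φ T Xt))
  have hUV : RCLike.re (inner ℂ U V) = ‖U‖ ^ 2 := by
    conv_lhs => rw [← rowRestrict_add_rowRestrict_compl T V]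
    rw [inner_add_right, inner_rowRestrict_rowRestrict_compl, add_zero, inner_self_eq_norm_sq]
  have hres : inner ℂ (Φ * U) (Φ * V + E) = 0 := by
    refine inner_mul_eq_zero_of_conjTranspose_colSub_mul_eq_zero Φ T ?_ hUT
    rw [← conjTranspose_colSub_mul_sub_mul_feedback Φ T Xt hinv, Matrix.mul_sub, hfeas]
    abel_nf
  have hΦUE : -RCLike.re (inner ℂ (Φ * U) E) ≤ √(1 + δt) * ‖U‖ * ‖E‖ := by
    have hΦU := hRICt.norm_mul_le
      ((Finset.card_le_card (rowSupp_subset_of_mem_rowSupported hUT)).trans hTcard.le)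
    have := re_inner_le_norm (𝕜 := ℂ) (Φ * U) (-E)
    rw [inner_neg_right, map_neg, norm_neg] at this
    nlinarith [norm_nonneg E]
  have hbil := hRICst.re_inner_sub_re_inner_mul_le hS
    (rowSupported_mono Finset.subset_union_left hUT) hVS
  have hres' := congrArg RCLike.re hres
  rw [inner_add_right, map_add, map_zero] at hres'
  have hkey : ‖U‖ ^ 2 ≤ ‖U‖ * (δst * ‖V‖ + √(1 + δt) * ‖E‖) := by nlinarith
  have hK : 0 ≤ δst * ‖V‖ + √(1 + δt) * ‖E‖ := by positivity
  nlinarith [norm_nonneg U]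

theorem stmt10_general {M N L s t : ℕ} (Φ : Matrix (Fin M) (Fin N) ℂ)
    (X : Matrix (Fin N) (Fin L) ℂ) (E : Matrix (Fin M) (Fin L) ℂ)
    (hXs : (rowSupp X).card ≤ s)
    (Y : Matrix (Fin M) (Fin L) ℂ) (hY : Y = Φ * X + E)
    (Xt : Matrix (Fin N) (Fin L) ℂ) (hfeas : Φ * Xt = Y)
    (T : Finset (Fin N)) (hTcard : T.card = t)
    (hinv : IsUnit ((colSub Φ T)ᴴ * colSub Φ T))
    (δst δt : ℝ) (hδst0 : 0 ≤ δst) (hδst1 : δst < 1)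
    (hRICst : IsRIC L Φ (s + t) δst) (hRICt : IsRIC L Φ t δt) :
    frobNorm (X - feedback Φ T Xt) ≤
      frobNorm (rowRestrict Tᶜ X) / Real.sqrt (1 - δst ^ 2) +
        Real.sqrt (1 + δt) * frobNorm E / (1 - δst) := by
  have hT := norm_rowRestrict_sub_feedback_le hXs (hfeas.trans hY) hTcard hinv hδst0 hRICst hRICt
  have hpyth := norm_sq_eq_norm_rowRestrict_sq_add T (X - feedback Φ T Xt)
  rw [rowRestrict_compl_sub_feedback] at hpyth
  simp only [frobNorm_eq_norm]
  exact le_div_sqrt_add_div_of_le_mul_add hδst0 hδst1 (norm_nonneg _) (norm_nonneg _)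
    (by positivity) hT hpyth

/-- Lemma 8 of the paper (feedback error bound). -/
theorem stmt10 {M N L s t : ℕ} (Φ : Matrix (Fin M) (Fin N) ℂ)
    (X : Matrix (Fin N) (Fin L) ℂ) (E : Matrix (Fin M) (Fin L) ℂ)
    (hXs : (rowSupp X).card ≤ s)
    (Y : Matrix (Fin M) (Fin L) ℂ) (hY : Y = Φ * X + E)
    (Xt : Matrix (Fin N) (Fin L) ℂ) (hfeas : Φ * Xt = Y)
    (T : Finset (Fin N)) (hTcard : T.card = t)
    (hinv : IsUnit ((colSub Φ T)ᴴ * colSub Φ T))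
    (δst δt : ℝ) (hδst0 : 0 ≤ δst) (hδst1 : δst < 1) (hδt0 : 0 ≤ δt)
    (hRICst : IsRIC L Φ (s + t) δst) (hRICt : IsRIC L Φ t δt) :
    frobNorm (X - feedback Φ T Xt) ≤
      frobNorm (rowRestrict Tᶜ X) / Real.sqrt (1 - δst ^ 2) +
        Real.sqrt (1 + δt) * frobNorm E / (1 - δst) :=
  stmt10_general Φ X E hXs Y hY Xt hfeas T hTcard hinv δst δt hδst0 hδst1 hRICst hRICt
end
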